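/- arXiv:1304.0661 — 4 statements merged into one kernel-verified Lean document; each statement's English description precedes it below -/
import Mathlib

section
/- For all n ≥ 3, Δ₁(2n+1) ≡ 0 (mod 3), where Δ₁(n) is the number of broken 1-diamond partitions of n. -/
open PowerSeries Finset

/-- Truncated (up to degree `N`) version of the generating function
`(-q;q)_∞ / ((q;q)²_∞ (-q^{2k+1};q^{2k+1})_∞)` for broken `k`-diamond partitions.
Factors of index larger than `N` do not affect coefficients up to `q^N`. -/
noncomputable def brokenDiamondGF (k N : ℕ) : PowerSeries ℤ :=
  (∏ i ∈ range (N + 1), (1 + (X : PowerSeries ℤ) ^ (i + 1))) *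
    PowerSeries.invOfUnit
      ((∏ i ∈ range (N + 1), (1 - (X : PowerSeries ℤ) ^ (i + 1))) ^ 2 *
        ∏ i ∈ range (N + 1), (1 + (X : PowerSeries ℤ) ^ ((2 * k + 1) * (i + 1)))) 1

/-- `Δ k n`: the number of broken `k`-diamond partitions of `n`, i.e. the coefficient
of `q^n` in `(-q;q)_∞ / ((q;q)²_∞ (-q^{2k+1};q^{2k+1})_∞)`. -/
noncomputable def Δ (k n : ℕ) : ℤ :=
  PowerSeries.coeff n (brokenDiamondGF k n)

/-- `ψ(q) = Σ_{m≥0} q^{m(m+1)/2}`, the generating function for triangular numbers. -/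
noncomputable def psi : PowerSeries ℤ :=
  PowerSeries.mk fun n => open scoped Classical in if ∃ m : ℕ, m * (m + 1) / 2 = n then 1 else 0

/-- Substitution `q ↦ q^k` in a formal power series. -/
noncomputable def substPow (k : ℕ) (f : PowerSeries ℤ) : PowerSeries ℤ :=
  PowerSeries.mk fun n => if k ∣ n then PowerSeries.coeff (n / k) f else 0

/-!
Modulo 3 the Frobenius gives `(q;q)³_∞ ≡ (q³;q³)_∞`, so the generating function of `Δ₁` is congruent to
`(-q;q)_∞ (q;q)_∞ / ((q³;q³)_∞ (-q³;q³)_∞) = (q²;q²)_∞ / (q⁶;q⁶)_∞`, a power series in `q²`.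
Hence all odd coefficients vanish modulo 3.
-/

section ProdIdentities

variable {ι A : Type*} [CommRing A] (s : Finset ι) (x : ι → A)

theorem prod_one_add_mul_prod_one_sub :
    (∏ i ∈ s, (1 + x i)) * ∏ i ∈ s, (1 - x i) = ∏ i ∈ s, (1 - x i ^ 2) := by
  rw [← prod_mul_distrib]
  exact prod_congr rfl fun i _ => by ring

theorem prod_one_sub_pow_expChar (p : ℕ) [ExpChar A p] :
    (∏ i ∈ s, (1 - x i)) ^ p = ∏ i ∈ s, (1 - x i ^ p) := by
  rw [← prod_pow]
  exact prod_congr rfl fun i _ => by rw [sub_pow_expChar, one_pow]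

theorem mul_prod_one_sub_pow_six_of_charP_three [CharP A 3] {g : A}
    (hg : g * ((∏ i ∈ s, (1 - x i)) ^ 2 * ∏ i ∈ s, (1 + x i ^ 3)) = ∏ i ∈ s, (1 + x i)) :
    g * ∏ i ∈ s, (1 - (x i ^ 3) ^ 2) = ∏ i ∈ s, (1 - x i ^ 2) := by
  calc g * ∏ i ∈ s, (1 - (x i ^ 3) ^ 2)
      = g * ((∏ i ∈ s, (1 - x i)) ^ 2 * ∏ i ∈ s, (1 + x i ^ 3)) * ∏ i ∈ s, (1 - x i) := by
        rw [← prod_one_add_mul_prod_one_sub, ← prod_one_sub_pow_expChar s x 3]; ring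
    _ = ∏ i ∈ s, (1 - x i ^ 2) := by rw [hg, prod_one_add_mul_prod_one_sub]

end ProdIdentities

theorem map_eq_self_of_mul_eq_of_isUnit {M F : Type*} [Monoid M] [FunLike F M M]
    [MonoidHomClass F M M] (σ : F) {a b c : M} (hb : IsUnit b) (habc : a * b = c) (hσb : σ b = b) (hσc : σ c = c) :
    σ a = a :=
  hb.mul_left_injective <| show σ a * b = a * b by
    rw [habc]; nth_rw 1 [← hσb]; rw [← map_mul, habc, hσc]

namespace PowerSeries

variable {R : Type*} [CommRing R]

theorem rescale_neg_one_prod_one_sub_sq_X_pow {ι : Type*} (s : Finset ι) (k : ι → ℕ) :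
    rescale (-1 : R) (∏ i ∈ s, (1 - ((X : R⟦X⟧) ^ k i) ^ 2)) = ∏ i ∈ s, (1 - (X ^ k i) ^ 2) := by
  simp [map_prod, rescale_X, ← pow_mul]

theorem coeff_eq_zero_of_rescale_neg_one_eq_self (h2 : IsUnit (2 : R)) {f : R⟦X⟧}
    (hf : rescale (-1) f = f) {n : ℕ} (hn : Odd n) : coeff n f = 0 := by
  have h : coeff n f = -coeff n f := by
    simpa [coeff_rescale, hn.neg_one_pow] using congrArg (coeff n) hf.symm
  exact h2.mul_right_eq_zero.mp (by linear_combination h)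

end PowerSeries

theorem brokenDiamondGF_mul (k N : ℕ) :
    brokenDiamondGF k N * ((∏ i ∈ range (N + 1), (1 - (X : PowerSeries ℤ) ^ (i + 1))) ^ 2 *
        ∏ i ∈ range (N + 1), (1 + (X : PowerSeries ℤ) ^ ((2 * k + 1) * (i + 1)))) =
      ∏ i ∈ range (N + 1), (1 + (X : PowerSeries ℤ) ^ (i + 1)) := by
  rw [brokenDiamondGF, mul_assoc, invOfUnit_mul _ _ (by simp [map_prod]), mul_one]

section CharThree

variable {R : Type*} [CommRing R] [CharP R 3]

theorem map_brokenDiamondGF_one_mul (N : ℕ) :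
    map (Int.castRingHom R) (brokenDiamondGF 1 N) *
        ∏ i ∈ range (N + 1), (1 - ((X : R⟦X⟧) ^ (3 * (i + 1))) ^ 2) =
      ∏ i ∈ range (N + 1), (1 - ((X : R⟦X⟧) ^ (i + 1)) ^ 2) := by
  have : CharP R⟦X⟧ 3 := charP_of_injective_ringHom C_injective 3
  have h := congrArg (map (Int.castRingHom R)) (brokenDiamondGF_mul 1 N)
  simp only [map_mul, map_pow, map_prod, map_add, map_sub, map_one, map_X,
    show 2 * 1 + 1 = 3 from rfl, pow_mul'] at h
  simpa only [pow_mul'] using mul_prod_one_sub_pow_six_of_charP_three _ _ h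

theorem rescale_neg_one_map_brokenDiamondGF_one (N : ℕ) :
    rescale (-1 : R) (map (Int.castRingHom R) (brokenDiamondGF 1 N)) =
      map (Int.castRingHom R) (brokenDiamondGF 1 N) :=
  map_eq_self_of_mul_eq_of_isUnit _ (isUnit_iff_constantCoeff.mpr (by simp [map_prod]))
    (map_brokenDiamondGF_one_mul N) (rescale_neg_one_prod_one_sub_sq_X_pow _ _)
    (rescale_neg_one_prod_one_sub_sq_X_pow _ _)

end CharThree

theorem delta1_odd_mod_three : ∀ n : ℕ, 3 ≤ n → (3 : ℤ) ∣ Δ 1 (2 * n + 1) := by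
  intro n _
  refine (ZMod.intCast_zmod_eq_zero_iff_dvd _ 3).mp ?_
  rw [Δ, ← eq_intCast (Int.castRingHom (ZMod 3)), ← coeff_map]
  exact coeff_eq_zero_of_rescale_neg_one_eq_self (by decide)
    (rescale_neg_one_map_brokenDiamondGF_one _) (odd_two_mul_add_one n)
end

section
/- The product formula ψ(q) := Σ_{n≥0} q^{n(n+1)/2} = Π_{n≥1} (1−q^{2n})²/(1−qⁿ) holds as formal power series. -/
/-!
Write `(a; q)_n = ∏_{i<n} (1 - a q^i)`, so that `qPochhammer q n = (q; q)_n`. Specialising the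
Cauchy `q`-binomial theorem `∏_{i<m} (x + q^i) = ∑_k [m, k]_q q^(k choose 2) x^(m-k)` to
`m = 2n`, `x = q^n` and dividing by a power of `q` gives a finite form of Jacobi's triple product
at `z = 1`: `(-q; q)_n (-1; q)_n = ∑_k [2n, k]_q q^(e_k)`, where the exponents `e_k` run twice
through the triangular numbers. Since `[2n, k]_q (q; q)_n ≡ 1` modulo `q^(min(k, 2n-k)+1)`,
multiplying by `(q; q)_n` gives `2 (q; q)_n (-q; q)_n² ≡ 2ψ` modulo `q^n`. Finally
`(q²; q²)_n = (q; q)_n (-q; q)_n`, so the right-hand side of the product formula is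
`(q; q)_n (-q; q)_n²`.
-/

open PowerSeries Finset

local notation "π[" N "]" => Ideal.Quotient.mk (Ideal.span {X ^ N})

section GaussianBinomial

variable {R : Type*} [CommRing R]

def qPochhammer (t : R) (n : ℕ) : R := ∏ i ∈ range n, (1 - t ^ (i + 1))

def gaussBinom (t : R) : ℕ → ℕ → R
  | _, 0 => 1
  | 0, _ + 1 => 0
  | m + 1, k + 1 => gaussBinom t m (k + 1) + t ^ (m - k) * gaussBinom t m k

variable (t : R)

@[simp] lemma gaussBinom_zero_right (m : ℕ) : gaussBinom t m 0 = 1 := by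
  cases m <;> rfl

lemma gaussBinom_succ_succ (m k : ℕ) :
    gaussBinom t (m + 1) (k + 1) = gaussBinom t m (k + 1) + t ^ (m - k) * gaussBinom t m k :=
  rfl

lemma gaussBinom_eq_zero_of_lt {m k : ℕ} (h : m < k) : gaussBinom t m k = 0 := by
  induction m generalizing k with
  | zero => obtain ⟨k, rfl⟩ := Nat.exists_eq_add_of_lt h; rfl
  | succ m ih =>
    obtain ⟨k, rfl⟩ := Nat.exists_eq_add_of_lt (Nat.zero_lt_of_lt h)
    rw [gaussBinom_succ_succ, ih (by omega), ih (by omega), mul_zero, add_zero]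

@[simp] lemma gaussBinom_self (m : ℕ) : gaussBinom t m m = 1 := by
  induction m with
  | zero => rfl
  | succ m ih =>
    rw [gaussBinom_succ_succ, gaussBinom_eq_zero_of_lt t (Nat.lt_succ_self m), ih]
    simp

lemma qPochhammer_succ (n : ℕ) : qPochhammer t (n + 1) = qPochhammer t n * (1 - t ^ (n + 1)) :=
  prod_range_succ _ _

lemma gaussBinom_mul_qPochhammer_mul_qPochhammer {m k : ℕ} (h : k ≤ m) :
    gaussBinom t m k * qPochhammer t k * qPochhammer t (m - k) = qPochhammer t m := by
  induction m generalizing k with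
  | zero =>
    obtain rfl : k = 0 := by omega
    simp [qPochhammer]
  | succ m ih =>
    rcases k with _ | k
    · simp [qPochhammer]
    rcases Nat.lt_or_ge k m with hkm | hkm
    · obtain ⟨d, rfl⟩ := Nat.exists_eq_add_of_lt hkm
      have h₁ := ih (k := k + 1) (by omega)
      have h₂ := ih (k := k) (by omega)
      rw [gaussBinom_succ_succ, qPochhammer_succ t (k + d + 1)]
      simp only [show k + d + 1 + 1 - (k + 1) = d + 1 by omega,
        show k + d + 1 - (k + 1) = d by omega, show k + d + 1 - k = d + 1 by omega] at h₁ h₂ ⊢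
      rw [qPochhammer_succ t k] at h₁ ⊢
      rw [qPochhammer_succ t d] at h₂ ⊢
      linear_combination (1 - t ^ (d + 1)) * h₁ + t ^ (d + 1) * (1 - t ^ (k + 1)) * h₂
        + qPochhammer t (k + d + 1) * (pow_add t (d + 1) (k + 1)).symm
    · obtain rfl : k = m := by omega
      simp [qPochhammer]

theorem prod_add_pow_eq_sum_gaussBinom (x : R) (m : ℕ) :
    ∏ i ∈ range m, (x + t ^ i) =
      ∑ k ∈ range (m + 1), gaussBinom t m k * t ^ k.choose 2 * x ^ (m - k) := by
  induction m with
  | zero => simp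
  | succ m ih =>
    have hx : ∑ k ∈ range (m + 1), gaussBinom t m k * t ^ k.choose 2 * x ^ (m - k) * x =
        ∑ k ∈ range (m + 1), gaussBinom t m (k + 1) * t ^ (k + 1).choose 2 * x ^ (m - k) +
          x ^ (m + 1) := by
      rw [sum_range_succ (fun k => gaussBinom t m (k + 1) * _ * _) m,
        gaussBinom_eq_zero_of_lt t (Nat.lt_succ_self m), sum_range_succ']
      simp only [gaussBinom_zero_right, Nat.choose_zero_succ, zero_mul, add_zero]
      congr 1
      · refine sum_congr rfl fun k hk => ?_
        rw [mul_assoc, ← pow_succ, show m - (k + 1) + 1 = m - k by grind]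
      · rw [Nat.sub_zero, pow_zero, one_mul, one_mul, pow_succ]
    have ht : ∑ k ∈ range (m + 1), gaussBinom t m k * t ^ k.choose 2 * x ^ (m - k) * t ^ m =
        ∑ k ∈ range (m + 1),
          t ^ (m - k) * gaussBinom t m k * t ^ (k + 1).choose 2 * x ^ (m - k) := by
      refine sum_congr rfl fun k hk => ?_
      have hkm : k ≤ m := Nat.lt_succ_iff.mp (mem_range.mp hk)
      rw [Nat.choose_succ_succ', Nat.choose_one_right,
        show t ^ m = t ^ (m - k) * t ^ k by rw [← pow_add, Nat.sub_add_cancel hkm]]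
      ring
    rw [prod_range_succ, ih, sum_range_succ' _ (m + 1)]
    simp only [gaussBinom_succ_succ, add_mul, sum_add_distrib, mul_add, sum_mul, hx, ht,
      Nat.add_sub_add_right, gaussBinom_zero_right, Nat.choose_zero_succ, pow_zero, one_mul,
      Nat.sub_zero]
    abel

end GaussianBinomial

namespace Nat

lemma le_choose_two_add_one (s : ℕ) : s ≤ s.choose 2 + 1 := by
  cases s with
  | zero => simp
  | succ s => rw [choose_succ_succ', choose_one_right]; omega

-- The exponents in the `q`-binomial expansion of `∏_{i<2n} (q^n + q^i)`, with `k = n - 1 - r`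
-- and `k = n + s`.
lemma choose_two_add_mul_sub_of_lt {n r : ℕ} (h : r < n) :
    (n - 1 - r).choose 2 + n * (2 * n - (n - 1 - r)) = n.choose 2 + n * n + (r + 2).choose 2 := by
  obtain ⟨k, rfl⟩ := Nat.exists_eq_add_of_lt h
  rw [show r + k + 1 - 1 - r = k by omega, show 2 * (r + k + 1) - k = k + 2 * r + 2 by omega]
  qify
  push_cast [cast_choose_two]
  ring

lemma choose_two_add_mul_sub_of_le {n s : ℕ} (h : s ≤ n) :
    (n + s).choose 2 + n * (2 * n - (n + s)) = n.choose 2 + n * n + s.choose 2 := by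
  obtain ⟨k, rfl⟩ := Nat.exists_eq_add_of_le h
  rw [show 2 * (s + k) - (s + k + s) = k by omega]
  qify
  push_cast [cast_choose_two]
  ring

lemma strictMono_succ_choose_two : StrictMono fun r : ℕ => (r + 1).choose 2 :=
  strictMono_nat_of_lt_succ fun r => by
    have := choose_succ_succ' (r + 1) 1
    simp only [choose_one_right, Nat.reduceAdd] at this
    omega

end Nat

section FiniteJacobi

variable {R : Type*} [CommRing R]

lemma prod_range_two_mul_X_pow_add_X_pow (n : ℕ) :
    ∏ i ∈ range (2 * n), ((X : R⟦X⟧) ^ n + X ^ i) =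
      X ^ (n.choose 2 + n * n) *
        ((∏ i ∈ range n, (1 + X ^ (i + 1))) * ∏ i ∈ range n, (1 + X ^ i)) := by
  have low : ∏ i ∈ range n, ((X : R⟦X⟧) ^ n + X ^ i) =
      X ^ n.choose 2 * ∏ i ∈ range n, (1 + X ^ (i + 1)) := by
    rw [← prod_range_reflect, Nat.choose_two_right, ← sum_range_id, ← sum_range_reflect,
      ← prod_pow_eq_pow_sum, ← prod_mul_distrib]
    refine prod_congr rfl fun i hi => ?_
    rw [mul_add, mul_one, ← pow_add, show n - 1 - i + (i + 1) = n by grind, add_comm]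
  have high : ∏ i ∈ range n, ((X : R⟦X⟧) ^ n + X ^ (n + i)) =
      X ^ (n * n) * ∏ i ∈ range n, (1 + X ^ i) := by
    simp only [pow_add, ← mul_one_add (X ^ n), prod_mul_distrib, prod_const, card_range, pow_mul]
  rw [two_mul, prod_range_add, low, high, pow_add]
  ring

theorem prod_one_add_X_pow_mul_prod_one_add_X_pow (n : ℕ) :
    (∏ i ∈ range n, (1 + (X : R⟦X⟧) ^ (i + 1))) * ∏ i ∈ range n, (1 + X ^ i) =
      ∑ r ∈ range n, gaussBinom X (2 * n) (n - 1 - r) * X ^ (r + 2).choose 2 +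
        ∑ s ∈ range (n + 1), gaussBinom X (2 * n) (n + s) * X ^ s.choose 2 := by
  apply X_pow_mul_cancel (k := n.choose 2 + n * n)
  rw [← prod_range_two_mul_X_pow_add_X_pow, prod_add_pow_eq_sum_gaussBinom,
    show 2 * n + 1 = n + (n + 1) by ring, sum_range_add, ← sum_range_reflect _ n, mul_add,
    mul_sum, mul_sum]
  congr 1 <;> refine sum_congr rfl fun i hi => ?_ <;>
    rw [← pow_mul, mul_assoc, ← pow_add, mul_left_comm, ← pow_add]
  · rw [Nat.choose_two_add_mul_sub_of_lt (mem_range.mp hi)]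
  · rw [Nat.choose_two_add_mul_sub_of_le (Nat.lt_succ_iff.mp (mem_range.mp hi))]

end FiniteJacobi

section Truncation

variable {R : Type*} [CommRing R]

lemma mk_eq_mk_iff_coeff_eq {N : ℕ} {f g : R⟦X⟧} :
    π[N] f = π[N] g ↔ ∀ j < N, coeff j f = coeff j g := by
  simp only [Ideal.Quotient.eq, Ideal.mem_span_singleton, X_pow_dvd_iff, map_sub, sub_eq_zero]

lemma mk_X_pow_of_le {N e : ℕ} (h : N ≤ e) : π[N] (X ^ e : R⟦X⟧) = 0 :=
  Ideal.Quotient.eq_zero_iff_mem.mpr (Ideal.mem_span_singleton.mpr (pow_dvd_pow X h))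

lemma mk_mul_X_pow_of_mk_eq_one {N a e : ℕ} {f : R⟦X⟧} (hf : π[a] f = 1) (h : N ≤ a + e) :
    π[N] (f * X ^ e) = π[N] (X ^ e) := by
  rw [← map_one π[a], Ideal.Quotient.eq, Ideal.mem_span_singleton] at hf
  rw [Ideal.Quotient.eq, Ideal.mem_span_singleton, ← sub_one_mul]
  exact (pow_dvd_pow X h).trans (pow_add (X : R⟦X⟧) a e ▸ mul_dvd_mul_right hf _)

lemma constantCoeff_qPochhammer_X (n : ℕ) : constantCoeff (qPochhammer (X : R⟦X⟧) n) = 1 := by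
  simp [qPochhammer, map_prod]

lemma isUnit_qPochhammer_X (n : ℕ) : IsUnit (qPochhammer (X : R⟦X⟧) n) :=
  isUnit_iff_constantCoeff.mpr (by rw [constantCoeff_qPochhammer_X]; exact isUnit_one)

lemma mk_qPochhammer_X_of_le {N a b : ℕ} (hN : N ≤ a + 1) (hab : a ≤ b) :
    π[N] (qPochhammer (X : R⟦X⟧) b) = π[N] (qPochhammer X a) := by
  obtain ⟨d, rfl⟩ := Nat.exists_eq_add_of_le hab
  simp only [qPochhammer, prod_range_add, map_mul]
  rw [map_prod π[N] _ (range d), prod_eq_one (s := range d) fun i _ => ?_, mul_one]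
  rw [map_sub, map_one, mk_X_pow_of_le (by omega), sub_zero]

theorem mk_gaussBinom_X_mul_qPochhammer_X {a m k n : ℕ} (hk : a ≤ k) (hkm : a + k ≤ m)
    (hn : a ≤ n) : π[a + 1] (gaussBinom X m k * qPochhammer (X : R⟦X⟧) n) = 1 := by
  have hu : IsUnit (π[a + 1] (qPochhammer (X : R⟦X⟧) a)) := (isUnit_qPochhammer_X a).map _
  have key := congrArg (π[a + 1] : R⟦X⟧ →+* _)
    (gaussBinom_mul_qPochhammer_mul_qPochhammer X (by omega : k ≤ m))
  simp only [map_mul, mk_qPochhammer_X_of_le le_rfl hk,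
    mk_qPochhammer_X_of_le le_rfl (by omega : a ≤ m - k),
    mk_qPochhammer_X_of_le le_rfl (by omega : a ≤ m)] at key
  rw [map_mul, mk_qPochhammer_X_of_le le_rfl hn]
  exact hu.mul_left_cancel (by linear_combination key)

theorem mk_qPochhammer_X_mul_prod_one_add_X_pow (n : ℕ) :
    π[n] (qPochhammer X n *
        ((∏ i ∈ range n, (1 + X ^ (i + 1))) * ∏ i ∈ range n, (1 + X ^ i))) =
      π[n] (∑ r ∈ range (n + 1), (X : R⟦X⟧) ^ (r + 1).choose 2 +
        ∑ r ∈ range n, X ^ (r + 1).choose 2) := by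
  have hsplit : ∑ r ∈ range (n + 1), (X : R⟦X⟧) ^ (r + 1).choose 2 +
      ∑ r ∈ range n, X ^ (r + 1).choose 2 =
        ∑ r ∈ range n, X ^ (r + 2).choose 2 + ∑ s ∈ range (n + 1), X ^ s.choose 2 := by
    rw [sum_range_succ', sum_range_succ' (fun s => (X : R⟦X⟧) ^ s.choose 2)]
    simp only [zero_add, Nat.choose_succ_self, Nat.choose_zero_succ, pow_zero]
    ring
  rw [hsplit, prod_one_add_X_pow_mul_prod_one_add_X_pow, mul_add, mul_sum, mul_sum, map_add,
    map_sum, map_sum, map_add, map_sum, map_sum]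
  congr 1 <;> refine sum_congr rfl fun i hi => ?_ <;> rw [← mul_assoc, mul_comm (qPochhammer _ _)]
  · have := Nat.le_choose_two_add_one (i + 2)
    exact mk_mul_X_pow_of_mk_eq_one (mk_gaussBinom_X_mul_qPochhammer_X le_rfl (by omega) (by omega))
      (by omega)
  · have := Nat.le_choose_two_add_one i
    have := mem_range.mp hi
    exact mk_mul_X_pow_of_mk_eq_one
      (mk_gaussBinom_X_mul_qPochhammer_X (a := n - i) (by omega) (by omega) (by omega)) (by omega)

end Truncation

lemma mk_psi_eq_sum {n N : ℕ} (h : n ≤ N) :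
    π[n] psi = π[n] (∑ r ∈ range N, (X : ℤ⟦X⟧) ^ (r + 1).choose 2) := by
  refine mk_eq_mk_iff_coeff_eq.mpr fun j hj => ?_
  have hT := Nat.strictMono_succ_choose_two
  simp only [psi, coeff_mk, map_sum, coeff_X_pow]
  split_ifs with hex
  · obtain ⟨m, rfl⟩ := hex
    have hm : m ≤ (m + 1).choose 2 := hT.id_le m
    rw [show m * (m + 1) / 2 = (m + 1).choose 2 by
      rw [Nat.choose_two_right, Nat.add_sub_cancel, mul_comm]] at hj ⊢
    simp only [hT.injective.eq_iff, sum_ite_eq, mem_range]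
    rw [if_pos (by omega)]
  · refine (sum_eq_zero fun r _ => if_neg ?_).symm
    rintro rfl
    exact hex ⟨r, by rw [Nat.choose_two_right, Nat.add_sub_cancel, mul_comm]⟩

theorem mk_two_mul_qPochhammer_X_mul_sq (n : ℕ) :
    π[n + 1] (2 * (qPochhammer X (n + 1) * (∏ i ∈ range (n + 1), (1 + X ^ (i + 1))) ^ 2)) =
      π[n + 1] (2 * psi) := by
  have h := mk_qPochhammer_X_mul_prod_one_add_X_pow (R := ℤ) (n + 1)
  rw [prod_range_succ' (fun i => 1 + (X : ℤ⟦X⟧) ^ i), pow_zero, one_add_one_eq_two] at h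
  have hE : π[n + 1] (∏ i ∈ range (n + 1), (1 + (X : ℤ⟦X⟧) ^ (i + 1))) =
      π[n + 1] (∏ i ∈ range n, (1 + X ^ (i + 1))) := by
    rw [prod_range_succ, map_mul, map_add, mk_X_pow_of_le le_rfl, add_zero, map_one, mul_one]
  rw [two_mul psi, map_add]
  nth_rw 1 [mk_psi_eq_sum (N := n + 1 + 1) (by omega)]
  rw [mk_psi_eq_sum le_rfl, ← map_add, ← h]
  simp only [map_mul, map_pow, hE]
  ring

theorem psi_product_formula :
    ∀ n : ℕ,
      PowerSeries.coeff n psi =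
        PowerSeries.coeff n
          ((∏ i ∈ range (n + 1), (1 - (X : PowerSeries ℤ) ^ (2 * (i + 1)))) ^ 2 *
            PowerSeries.invOfUnit
              (∏ i ∈ range (n + 1), (1 - (X : PowerSeries ℤ) ^ (i + 1))) 1) := by
  intro n
  show coeff n psi =
    coeff n ((∏ i ∈ range (n + 1), (1 - (X : ℤ⟦X⟧) ^ (2 * (i + 1)))) ^ 2 *
      invOfUnit (qPochhammer X (n + 1)) 1)
  have hsq : ∏ i ∈ range (n + 1), (1 - (X : ℤ⟦X⟧) ^ (2 * (i + 1))) =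
      qPochhammer X (n + 1) * ∏ i ∈ range (n + 1), (1 + X ^ (i + 1)) := by
    rw [qPochhammer, ← prod_mul_distrib]
    exact prod_congr rfl fun i _ => by ring
  have hinv : qPochhammer (X : ℤ⟦X⟧) (n + 1) * invOfUnit (qPochhammer X (n + 1)) 1 = 1 :=
    mul_invOfUnit _ _ (by simp [constantCoeff_qPochhammer_X])
  have key := mk_eq_mk_iff_coeff_eq.mp (mk_two_mul_qPochhammer_X_mul_sq n) n n.lt_succ_self
  rw [← map_ofNat C 2, coeff_C_mul, coeff_C_mul] at key
  set P := qPochhammer (X : ℤ⟦X⟧) (n + 1)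
  set E := ∏ i ∈ range (n + 1), (1 + (X : ℤ⟦X⟧) ^ (i + 1))
  rw [hsq, show (P * E) ^ 2 * invOfUnit P 1 = P * E ^ 2 by linear_combination P * E ^ 2 * hinv]
  exact (mul_left_cancel₀ two_ne_zero key).symm
end

section
/- As formal power series over ℤ, (q;q)³_∞ ≡ (q³;q³)_∞ (mod 3), i.e., all coefficients of (q;q)³_∞ − (q³;q³)_∞ are divisible by 3. -/
open PowerSeries Finset

/-! In characteristic `p` the Frobenius `f ↦ f ^ p` is additive, so `(1 - X^m)^p = 1 - X^(p m)`
factor by factor; reducing the integer products modulo `p` gives the congruence. -/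

instance PowerSeries.charP (R : Type*) [Semiring R] (p : ℕ) [CharP R p] : CharP R⟦X⟧ p :=
  charP_of_injective_ringHom C_injective p

theorem prod_one_sub_X_pow_pow_char {R : Type*} [CommRing R] (p : ℕ) [Fact p.Prime] [CharP R p]
    (s : Finset ℕ) (e : ℕ → ℕ) :
    (∏ i ∈ s, (1 - (X : R⟦X⟧) ^ e i)) ^ p = ∏ i ∈ s, (1 - (X : R⟦X⟧) ^ (p * e i)) := by
  rw [← prod_pow]
  refine prod_congr rfl fun i _ => ?_
  rw [sub_pow_char, one_pow, ← pow_mul, mul_comm]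

theorem intCast_dvd_coeff_sub_of_map_eq (p n : ℕ) {f g : PowerSeries ℤ}
    (h : map (Int.castRingHom (ZMod p)) f = map (Int.castRingHom (ZMod p)) g) :
    (p : ℤ) ∣ coeff n (f - g) := by
  rw [← ZMod.intCast_zmod_eq_zero_iff_dvd, ← eq_intCast (Int.castRingHom (ZMod p)),
    ← coeff_map, map_sub, h, sub_self, map_zero]

theorem prime_dvd_coeff_prod_one_sub_X_pow_pow_sub (p : ℕ) [Fact p.Prime] (n : ℕ)
    (s : Finset ℕ) (e : ℕ → ℕ) :
    (p : ℤ) ∣ coeff n ((∏ i ∈ s, (1 - (X : PowerSeries ℤ) ^ e i)) ^ p -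
      ∏ i ∈ s, (1 - (X : PowerSeries ℤ) ^ (p * e i))) := by
  apply intCast_dvd_coeff_sub_of_map_eq
  simp only [map_pow, map_prod, map_sub, map_one, map_X]
  exact prod_one_sub_X_pow_pow_char p s e

theorem euler_cube_mod_three :
    ∀ n : ℕ,
      (3 : ℤ) ∣ PowerSeries.coeff n
        ((∏ i ∈ range (n + 1), (1 - (X : PowerSeries ℤ) ^ (i + 1))) ^ 3 -
          ∏ i ∈ range (n + 1), (1 - (X : PowerSeries ℤ) ^ (3 * (i + 1)))) :=
  fun n => prime_dvd_coeff_prod_one_sub_X_pow_pow_sub 3 n (range (n + 1)) (· + 1)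
end

section
/- Assuming Σ_{n≥0} Δ₂(3n+1) qⁿ ≡ 2q ψ(q⁵)² (mod 3), one has Σ_{n≥0} Δ₂(9n+7) qⁿ ≡ 2q³ ψ(q¹⁵)² (mod 3) as formal power series. -/
open PowerSeries Finset

/-! The hypothesis at `3n + 2` is about `Δ₂(9n + 7)`, so it suffices that the `q^(3n+2)`
coefficients of `2qψ(q⁵)²` are the `q^n` coefficients of `2q³ψ(q¹⁵)²`. A triangular number is
never `≡ 2 (mod 3)`, and those `≡ 1 (mod 3)` are exactly `9T + 1` with `T` triangular; this is the
3-dissection `ψ(q) = f(q³) + qψ(q⁹)`. Hence `ψ(q⁵) = f(q¹⁵) + q⁵ψ(q⁴⁵)`, and in its square only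
`q¹⁰ψ(q⁴⁵)²` has exponents `≡ 1 (mod 3)`. -/

def IsTriangular (n : ℕ) : Prop := ∃ m, m * (m + 1) / 2 = n

theorem mul_succ_self_mod_three (m : ℕ) : m * (m + 1) % 3 = if m % 3 = 1 then 2 else 0 := by
  rcases (by omega : m % 3 = 0 ∨ m % 3 = 1 ∨ m % 3 = 2) with h | h | h <;>
    simp [Nat.mul_mod, Nat.add_mod, h]

theorem not_isTriangular_three_mul_add_two (n : ℕ) : ¬ IsTriangular (3 * n + 2) := by
  rintro ⟨m, hm⟩
  have := mul_succ_self_mod_three m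
  obtain ⟨e, he⟩ := Nat.even_mul_succ_self m
  split_ifs at this <;> omega

theorem isTriangular_three_mul_add_one_iff (n : ℕ) :
    IsTriangular (3 * n + 1) ↔ 3 ∣ n ∧ IsTriangular (n / 3) := by
  constructor
  · rintro ⟨m, hm⟩
    have hmod := mul_succ_self_mod_three m
    obtain ⟨a, rfl⟩ : ∃ a, m = 3 * a + 1 := by
      obtain ⟨e, he⟩ := Nat.even_mul_succ_self m
      split_ifs at hmod with h
      · exact ⟨m / 3, by omega⟩
      · omega
    obtain ⟨e, he⟩ := Nat.even_mul_succ_self a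
    have : (3 * a + 1) * (3 * a + 1 + 1) = 9 * (a * (a + 1)) + 2 := by ring
    exact ⟨⟨e, by omega⟩, a, by omega⟩
  · rintro ⟨⟨c, rfl⟩, a, ha⟩
    refine ⟨3 * a + 1, ?_⟩
    obtain ⟨e, he⟩ := Nat.even_mul_succ_self a
    have : (3 * a + 1) * (3 * a + 1 + 1) = 9 * (a * (a + 1)) + 2 := by ring
    omega

theorem coeff_psi_of_not_isTriangular {n : ℕ} (h : ¬ IsTriangular n) : coeff n psi = 0 := by
  rw [psi, coeff_mk]
  exact if_neg h

theorem coeff_psi_congr {a b : ℕ} (h : IsTriangular a ↔ IsTriangular b) :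
    coeff a psi = coeff b psi := by
  simp only [psi, coeff_mk]
  congr 1
  exact propext h

theorem coeff_X_pow_mul_expand {R : Type*} [CommRing R] {p r s : ℕ} (hp : p ≠ 0) (hr : r < p)
    (hs : s < p) (f : R⟦X⟧) (n : ℕ) :
    coeff (p * n + r) (X ^ s * expand p hp f) = if s = r then coeff n f else 0 := by
  rw [coeff_X_pow_mul', coeff_expand]
  split_ifs with hsn hdvd hsr hsr
  · subst hsr
    simp [Nat.mul_div_cancel_left n (Nat.pos_of_ne_zero hp)]
  · obtain ⟨c, hc⟩ := hdvd
    have := congrArg (· % p) (show p * c + s = p * n + r by omega)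
    simp only [Nat.mul_add_mod, Nat.mod_eq_of_lt hr, Nat.mod_eq_of_lt hs] at this
    exact absurd this hsr
  · subst hsr
    simp at hdvd
  · rfl
  · omega
  · rfl

theorem coeff_three_mul_add_one_psi (n : ℕ) :
    coeff (3 * n + 1) psi = coeff n (expand 3 three_ne_zero psi) := by
  rw [coeff_expand]
  split_ifs with h
  · exact coeff_psi_congr (by simp [isTriangular_three_mul_add_one_iff, h])
  · exact coeff_psi_of_not_isTriangular (by simp [isTriangular_three_mul_add_one_iff, h])

theorem coeff_three_mul_add_two_psi (n : ℕ) : coeff (3 * n + 2) psi = 0 :=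
  coeff_psi_of_not_isTriangular (not_isTriangular_three_mul_add_two n)

theorem psi_trisection :
    ∃ a : ℤ⟦X⟧, psi = expand 3 three_ne_zero a + X * expand 9 (by norm_num) psi := by
  refine ⟨mk fun n => coeff (3 * n) psi, ?_⟩
  ext n
  obtain ⟨q, r, hr, rfl⟩ : ∃ q r, r < 3 ∧ n = 3 * q + r := ⟨n / 3, n % 3, by omega, by omega⟩
  have h0 := coeff_X_pow_mul_expand three_ne_zero hr (by norm_num : 0 < 3)
    (mk fun n => coeff (3 * n) psi) q
  have h1 := coeff_X_pow_mul_expand three_ne_zero hr (by norm_num : 1 < 3)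
    (expand 3 three_ne_zero psi) q
  rw [pow_zero, one_mul] at h0
  rw [pow_one] at h1
  rw [map_add, h0, expand_mul 3 three_ne_zero 3 three_ne_zero, h1]
  interval_cases r
  · simp
  · simpa using coeff_three_mul_add_one_psi q
  · simpa using coeff_three_mul_add_two_psi q

theorem expand_five_psi_sq_trisection :
    ∃ f g : ℤ⟦X⟧, expand 5 (by norm_num) psi ^ 2 = expand 3 three_ne_zero f +
      X * expand 3 three_ne_zero (X ^ 3 * expand 15 (by norm_num) psi ^ 2) +
      X ^ 2 * expand 3 three_ne_zero g := by
  obtain ⟨a, ha⟩ := psi_trisection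
  set b := expand 5 (by norm_num) a
  set c := expand 15 (by norm_num) psi
  refine ⟨b ^ 2, 2 * X * b * c, ?_⟩
  have hb : expand 5 (by norm_num) (expand 3 three_ne_zero a) = expand 3 three_ne_zero b := by
    rw [← expand_mul, ← expand_mul]
  have hc : expand 5 (by norm_num) (expand 9 (by norm_num) psi) = expand 3 three_ne_zero c := by
    rw [← expand_mul, ← expand_mul]
  conv_lhs => rw [ha, map_add, map_mul, expand_X, hb, hc]
  simp only [map_mul, map_pow, expand_X, map_ofNat]
  ring

theorem coeff_three_mul_add_one_expand_five_psi_sq (n : ℕ) :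
    coeff (3 * n + 1) (expand 5 (by norm_num) psi ^ 2) =
      coeff n (X ^ 3 * expand 15 (by norm_num) psi ^ 2) := by
  obtain ⟨f, g, h⟩ := expand_five_psi_sq_trisection
  have key := fun s (hs : s < 3) (F : ℤ⟦X⟧) =>
    coeff_X_pow_mul_expand three_ne_zero (by norm_num : 1 < 3) hs F n
  have h0 := key 0 (by norm_num) f
  have h1 := key 1 (by norm_num) (X ^ 3 * expand 15 (by norm_num) psi ^ 2)
  have h2 := key 2 (by norm_num) g
  rw [pow_zero, one_mul] at h0
  rw [pow_one] at h1
  rw [h, map_add, map_add, h0, h1, h2]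
  simp

theorem substPow_eq_expand {k : ℕ} (hk : k ≠ 0) (f : ℤ⟦X⟧) : substPow k f = expand k hk f := by
  ext n
  rw [substPow, coeff_mk, coeff_expand]

theorem coeff_three_mul_add_two_two_mul_X_mul_substPow_five_psi_sq (n : ℕ) :
    coeff (3 * n + 2) (2 * X * substPow 5 psi ^ 2) =
      coeff n (2 * X ^ 3 * substPow 15 psi ^ 2) := by
  rw [substPow_eq_expand (by norm_num), substPow_eq_expand (by norm_num), ← map_ofNat C 2]
  simp only [mul_assoc, coeff_C_mul]
  rw [show 3 * n + 2 = 3 * n + 1 + 1 from rfl, coeff_succ_X_mul,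
    coeff_three_mul_add_one_expand_five_psi_sq]

theorem delta2_9n7_from_3n1
    (h : ∀ n : ℕ, (3 : ℤ) ∣ (Δ 2 (3 * n + 1) -
      PowerSeries.coeff n (2 * (X : PowerSeries ℤ) * (substPow 5 psi) ^ 2))) :
    ∀ n : ℕ, (3 : ℤ) ∣ (Δ 2 (9 * n + 7) -
      PowerSeries.coeff n (2 * (X : PowerSeries ℤ) ^ 3 * (substPow 15 psi) ^ 2)) := by
  intro n
  have h' := h (3 * n + 2)
  rwa [show 3 * (3 * n + 2) + 1 = 9 * n + 7 by ring,
    coeff_three_mul_add_two_two_mul_X_mul_substPow_five_psi_sq] at h'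
end
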